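/- arXiv:1307.2828 — 2 statements merged into one kernel-verified Lean document; each statement's English description precedes it below -/
import Mathlib

section
/- An infinite word s admits a prefixal factorization if and only if s has only finitely many unbordered prefixes. -/
variable {A B : Type}

/-- The finite word `u` occurs in the infinite word `x` at position `k`. -/
def FactorAt (u : List A) (x : ℕ → A) (k : ℕ) : Prop :=
  u = (List.range u.length).map fun i => x (k + i)

/-- `u` is a factor of the infinite word `x`. -/
def IsFactorOf (u : List A) (x : ℕ → A) : Prop :=
  ∃ k, FactorAt u x k

/-- `u` is a prefix of the infinite word `x`. -/
def IsPrefixOf (u : List A) (x : ℕ → A) : Prop :=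
  FactorAt u x 0

/-- Starting position of the `n`-th block in the factorization `U`. -/
def facPos (U : ℕ → List A) : ℕ → ℕ
  | 0 => 0
  | n + 1 => facPos U n + (U n).length

/-- `x = U 0 ++ U 1 ++ U 2 ++ ⋯` with all blocks non-empty. -/
def IsFactorizationOf (U : ℕ → List A) (x : ℕ → A) : Prop :=
  (∀ n, U n ≠ []) ∧ ∀ n, FactorAt (U n) x (facPos U n)

/-- A factorization of `x` into non-empty prefixes of `x`. -/
def IsPrefixalFactorizationOf (U : ℕ → List A) (x : ℕ → A) : Prop :=
  IsFactorizationOf U x ∧ ∀ n, IsPrefixOf (U n) x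

/-- `x` admits a finite coloring of its factors with no monochromatic factorization. -/
def InP (x : ℕ → A) : Prop :=
  ∃ (C : Type) (_ : Fintype C) (c : List A → C),
    ∀ U : ℕ → List A, IsFactorizationOf U x → ∃ i j, c (U i) ≠ c (U j)

/-- `u` has a border: a non-empty proper prefix which is also a suffix. -/
def Bordered (u : List A) : Prop :=
  ∃ v : List A, v ≠ [] ∧ v.length < u.length ∧ v <+: u ∧ v <:+ u

def seg (s : ℕ → A) (k n : ℕ) : List A := (List.range n).map fun i => s (k + i)

lemma seg_length (s : ℕ → A) (k n : ℕ) : (seg s k n).length = n := by simp [seg]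

lemma factorAt_iff {u : List A} {s : ℕ → A} {k : ℕ} :
    FactorAt u s k ↔ u = seg s k u.length := Iff.rfl

lemma factorAt_seg (s : ℕ → A) (k n : ℕ) : FactorAt (seg s k n) s k := by
  rw [factorAt_iff, seg_length]

lemma seg_append (s : ℕ → A) (k a b : ℕ) :
    seg s k (a + b) = seg s k a ++ seg s (k + a) b := by
  simp [seg, List.range_add, List.map_map, Function.comp, add_assoc]

lemma seg_take (s : ℕ → A) (k : ℕ) {m n : ℕ} (h : m ≤ n) :
    (seg s k n).take m = seg s k m := by
  obtain ⟨d, rfl⟩ := Nat.exists_eq_add_of_le h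
  rw [seg_append, List.take_append_of_le_length (by simp [seg_length]),
    List.take_of_length_le (by simp [seg_length])]

lemma seg_drop (s : ℕ → A) (k : ℕ) {m n : ℕ} (h : m ≤ n) :
    (seg s k n).drop m = seg s (k + m) (n - m) := by
  obtain ⟨d, rfl⟩ := Nat.exists_eq_add_of_le h
  rw [seg_append, show m + d - m = d by omega]
  have := List.drop_left (l₁ := seg s k m) (l₂ := seg s (k + m) d)
  rwa [seg_length] at this

lemma pref_prefix (s : ℕ → A) {m n : ℕ} (h : m ≤ n) : seg s 0 m <+: seg s 0 n :=
  seg_take s 0 h ▸ List.take_prefix m (seg s 0 n)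

lemma prefix_eq_seg {s : ℕ → A} {u : List A} {n : ℕ} (hu : u <+: seg s 0 n)
    (h : u.length ≤ n) : u = seg s 0 u.length := by
  rw [List.prefix_iff_eq_take] at hu
  conv_lhs => rw [hu]
  rw [seg_take s 0 h]

lemma facPos_ge (U : ℕ → List A) (h : ∀ n, U n ≠ []) (n : ℕ) : n ≤ facPos U n := by
  induction n with
  | zero => simp [facPos]
  | succ n ih =>
    have : 0 < (U n).length := List.length_pos_iff.2 (h n)
    simp only [facPos]; omega

lemma forward_bound {s : ℕ → A} {U : ℕ → List A} (hU : IsPrefixalFactorizationOf U s)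
    {u : List A} (hne : u ≠ []) (hpref : IsPrefixOf u s) (hub : ¬ Bordered u) :
    u.length ≤ (U 0).length := by
  classical
  by_contra hlen
  push_neg at hlen
  obtain ⟨⟨hne', hfac⟩, hpre⟩ := hU
  set L := u.length with hLdef
  have hL : 0 < L := List.length_pos_iff.2 hne
  have hex : ∃ n, L ≤ facPos U (n + 1) := by
    refine ⟨L, ?_⟩
    have := facPos_ge U hne' (L + 1)
    omega
  set n := Nat.find hex with hn
  have h1 : L ≤ facPos U (n + 1) := Nat.find_spec hex
  have h0 : facPos U n < L := by
    rcases Nat.eq_zero_or_pos n with h | h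
    · rw [h]; simpa [facPos] using hL
    · obtain ⟨m, hm⟩ := Nat.exists_eq_add_of_lt h
      have hmlt : m < n := by omega
      have := Nat.find_min hex hmlt
      have : facPos U (m + 1) < L := by omega
      have hmn : m + 1 = n := by omega
      rwa [hmn] at this
  set p := facPos U n with hp
  have hppos : 0 < p := by
    rcases Nat.eq_zero_or_pos n with h | h
    · exfalso
      have h10 : facPos U 1 = (U 0).length := by simp [facPos]
      rw [h, Nat.zero_add] at h1
      omega
    · have := facPos_ge U hne' n; omega
  -- the suffix of u starting at position p is a prefix of s
  have hu : u = seg s 0 L := hpref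
  have hUn1 : U n = seg s p ((U n).length) := hfac n
  have hUn2 : U n = seg s 0 ((U n).length) := hpre n
  have hfp : facPos U (n + 1) = p + (U n).length := rfl
  have hle : L - p ≤ (U n).length := by omega
  have hv : seg s p (L - p) = seg s 0 (L - p) := by
    rw [← seg_take s p hle, ← seg_take s 0 hle, ← hUn1, ← hUn2]
  apply hub
  refine ⟨seg s p (L - p), ?_, ?_, ?_, ?_⟩
  · have := seg_length s p (L - p)
    intro hcon; rw [hcon] at this; simp at this; omega
  · rw [seg_length]; omega
  · rw [hv, hu]; exact pref_prefix s (by omega)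
  · have hs := seg_append s 0 p (L - p)
    rw [Nat.zero_add, show p + (L - p) = L by omega] at hs
    exact ⟨seg s 0 p, by rw [hu, hs]⟩

lemma backward_step {s : ℕ → A} {N : ℕ}
    (hN : ∀ u : List A, u ≠ [] → IsPrefixOf u s → ¬ Bordered u → u.length ≤ N)
    {n : ℕ} (hn : 0 < n) :
    ∃ a, a < n ∧ n ≤ a + N ∧ seg s a (n - a) = seg s 0 (n - a) := by
  classical
  by_cases hnN : n ≤ N
  · exact ⟨0, hn, by omega, by rw [Nat.sub_zero]⟩
  push_neg at hnN
  -- the prefix of length n is bordered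
  have hbord : Bordered (seg s 0 n) := by
    by_contra hub
    have := hN (seg s 0 n) (by intro h; have := seg_length s 0 n; rw [h] at this; simp at this; omega)
      (factorAt_seg s 0 n) hub
    rw [seg_length] at this; omega
  -- borders correspond to Q
  have hQ : ∃ m, 0 < m ∧ m < n ∧ seg s 0 m <:+ seg s 0 n := by
    obtain ⟨v, hv1, hv2, hv3, hv4⟩ := hbord
    rw [seg_length] at hv2
    have hveq : v = seg s 0 v.length := prefix_eq_seg hv3 (by omega)
    exact ⟨v.length, List.length_pos_iff.2 hv1, hv2, hveq ▸ hv4⟩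
  set m0 := Nat.find hQ with hm0
  obtain ⟨hm01, hm02, hm03⟩ := Nat.find_spec hQ
  -- the shortest border is unbordered
  have hub : ¬ Bordered (seg s 0 m0) := by
    rintro ⟨w, hw1, hw2, hw3, hw4⟩
    rw [seg_length] at hw2
    have hweq : w = seg s 0 w.length := prefix_eq_seg hw3 (by omega)
    have : 0 < w.length ∧ w.length < n ∧ seg s 0 w.length <:+ seg s 0 n :=
      ⟨List.length_pos_iff.2 hw1, by omega, hweq ▸ (hw4.trans hm03)⟩
    exact Nat.find_min hQ hw2 this
  have hm0N : m0 ≤ N := by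
    have := hN (seg s 0 m0)
      (by intro h; have := seg_length s 0 m0; rw [h] at this; simp at this; omega)
      (factorAt_seg s 0 m0) hub
    rwa [seg_length] at this
  refine ⟨n - m0, by omega, by omega, ?_⟩
  rw [show n - (n - m0) = m0 by omega]
  -- from the suffix property
  obtain ⟨t, ht⟩ := hm03
  have htlen : t.length = n - m0 := by
    have := congrArg List.length ht
    simp [seg_length] at this
    omega
  have := congrArg (List.drop (n - m0)) ht
  rw [← htlen, List.drop_left, htlen] at this
  rw [seg_drop s 0 (by omega : n - m0 ≤ n), Nat.zero_add,
    show n - (n - m0) = m0 by omega] at this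
  exact this.symm

section Chains

variable {R : ℕ → ℕ → Prop} {N : ℕ}

/-- positions from which arbitrarily long chains start -/
def Tall (R : ℕ → ℕ → Prop) (a : ℕ) : Prop :=
  ∀ m, ∃ b, m ≤ b ∧ Relation.ReflTransGen R a b

lemma chain_from_zero (hstep : ∀ n, 0 < n → ∃ a, R a n ∧ a < n) :
    ∀ n, Relation.ReflTransGen R 0 n := by
  intro n
  induction n using Nat.strong_induction_on with
  | _ n ih =>
    rcases Nat.eq_zero_or_pos n with rfl | hn
    · exact .refl
    · obtain ⟨a, ha, hlt⟩ := hstep n hn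
      exact (ih a hlt).tail ha

lemma tall_zero (hstep : ∀ n, 0 < n → ∃ a, R a n ∧ a < n) : Tall R 0 :=
  fun m => ⟨m, le_refl m, chain_from_zero hstep m⟩

lemma tall_succ (hbd : ∀ a b, R a b → a < b ∧ b ≤ a + N)
    {a : ℕ} (ha : Tall R a) : ∃ b, R a b ∧ Tall R b := by
  classical
  by_contra h
  push_neg at h
  have hnot : ∀ b, ¬ Tall R b → ∃ m, ∀ c, m ≤ c → ¬ Relation.ReflTransGen R b c := by
    intro b hb
    simp only [Tall, not_forall, not_exists, not_and] at hb
    exact hb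
  set f : ℕ → ℕ := fun b => if hb : ¬ Tall R b then Classical.choose (hnot b hb) else 0 with hf
  set M := (Finset.Ioc a (a + N)).sup f with hM
  obtain ⟨b, hb1, hb2⟩ := ha (M + a + 1)
  rcases hb2.cases_head with rfl | ⟨c, hac, hcb⟩
  · omega
  · have hcT : ¬ Tall R c := h c hac
    have hcIoc : c ∈ Finset.Ioc a (a + N) := by
      have := hbd a c hac
      simp [Finset.mem_Ioc]; omega
    have hfc : f c = Classical.choose (hnot c hcT) := by
      rw [hf]; simp only [dif_pos hcT]
    have hspec := Classical.choose_spec (hnot c hcT)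
    apply hspec b _ hcb
    have : f c ≤ M := Finset.le_sup hcIoc
    omega

lemma exists_seq (h0 : Tall R 0)
    (hsucc : ∀ a, Tall R a → ∃ b, R a b ∧ Tall R b) :
    ∃ p : ℕ → ℕ, p 0 = 0 ∧ ∀ n, R (p n) (p (n + 1)) := by
  choose g hg1 hg2 using hsucc
  let q : ℕ → {a : ℕ // Tall R a} := fun n =>
    Nat.rec ⟨0, h0⟩ (fun _ x => ⟨g x.1 x.2, hg2 x.1 x.2⟩) n
  exact ⟨fun n => (q n).1, rfl, fun n => hg1 (q n).1 (q n).2⟩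

end Chains

theorem prefixal_factorization_iff_finitely_many_unbordered_prefixes
    (s : ℕ → A) :
    (∃ U : ℕ → List A, IsPrefixalFactorizationOf U s) ↔
      {u : List A | u ≠ [] ∧ IsPrefixOf u s ∧ ¬ Bordered u}.Finite := by
  constructor
  · rintro ⟨U, hU⟩
    apply Set.Finite.subset ((Set.finite_Iic (U 0).length).image fun m => seg s 0 m)
    rintro u ⟨hne, hpref, hub⟩
    exact ⟨u.length, forward_bound hU hne hpref hub, (factorAt_iff.mp hpref).symm⟩
  · intro hfin
    obtain ⟨N, hN⟩ : ∃ N, ∀ u : List A, u ≠ [] → IsPrefixOf u s → ¬ Bordered u →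
        u.length ≤ N := by
      obtain ⟨N, hN⟩ := (hfin.image List.length).bddAbove
      exact ⟨N, fun u h1 h2 h3 => hN (Set.mem_image_of_mem _ ⟨h1, h2, h3⟩)⟩
    set R : ℕ → ℕ → Prop :=
      fun a b => a < b ∧ b ≤ a + N ∧ seg s a (b - a) = seg s 0 (b - a) with hR
    have hstep : ∀ n, 0 < n → ∃ a, R a n ∧ a < n := by
      intro n hn
      obtain ⟨a, h1, h2, h3⟩ := backward_step hN hn
      exact ⟨a, ⟨h1, h2, h3⟩, h1⟩
    have hbd : ∀ a b, R a b → a < b ∧ b ≤ a + N := fun a b h => ⟨h.1, h.2.1⟩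
    obtain ⟨p, hp0, hpR⟩ := exists_seq (tall_zero hstep) (fun a ha => tall_succ hbd ha)
    set U : ℕ → List A := fun n => seg s 0 (p (n + 1) - p n) with hUdef
    have hmono : ∀ n, p n < p (n + 1) := fun n => (hpR n).1
    have hfp : ∀ n, facPos U n = p n := by
      intro n
      induction n with
      | zero => simp [facPos, hp0]
      | succ n ih =>
        have h1 := hmono n
        rw [facPos, ih]
        simp only [hUdef, seg_length]
        omega
    refine ⟨U, ⟨⟨?_, ?_⟩, ?_⟩⟩
    · intro n hcon
      have h1 := hmono n
      have := seg_length s 0 (p (n + 1) - p n)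
      rw [show seg s 0 (p (n + 1) - p n) = U n from rfl, hcon] at this
      simp at this
      omega
    · intro n
      rw [factorAt_iff, hfp n]
      show seg s 0 (p (n + 1) - p n) = seg s (p n) ((seg s 0 (p (n + 1) - p n)).length)
      rw [seg_length]
      exact (hpR n).2.2.symm
    · intro n
      exact factorAt_seg s 0 (p (n + 1) - p n)
end

section
/- If s ∈ A^ω is overlap-free, then in every prefixal factorization s = U₁U₂⋯ there exist indices i, j such that Uᵢ and Uⱼ end with different letters; consequently there is a finite coloring of the non-empty factors of s with no monochromatic factorization. -/
variable {A B : Type}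

/-- `s` contains no factor of the form `v v a` with `a` the first letter of `v`. -/
def OverlapFree (s : ℕ → A) : Prop :=
  ¬ ∃ (v : List A) (a : A), v.head? = some a ∧ IsFactorOf (v ++ v ++ [a]) s

/-! ### Auxiliary lemmas -/

lemma factorAt_get {u : List A} {x : ℕ → A} {k : ℕ} (h : FactorAt u x k)
    (i : ℕ) (hi : i < u.length) : u[i] = x (k + i) := by
  rw [List.getElem_of_eq h hi]
  simp

lemma facPos_succ (U : ℕ → List A) (n : ℕ) :
    facPos U (n + 1) = facPos U n + (U n).length := rfl

/-- The basic overlap construction: if `p > 0` and `s (q+p+i) = s (q+i)` for all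
`i ≤ p`, then `s` has an overlap `v v a` with `v = s[q..q+p)` and `a = s q`. -/
lemma overlap_aux (s : ℕ → A) (hof : OverlapFree s) (q p : ℕ) (hp : 0 < p)
    (h : ∀ i ≤ p, s (q + p + i) = s (q + i)) : False := by
  apply hof
  refine ⟨(List.range p).map fun i => s (q + i), s q, ?_, q, ?_⟩
  · obtain ⟨t, rfl⟩ := Nat.exists_eq_succ_of_ne_zero hp.ne'
    rw [List.range_succ_eq_map]
    simp
  · show _ = (List.range (((List.range p).map fun i => s (q + i)) ++
      ((List.range p).map fun i => s (q + i)) ++ [s q]).length).map fun i => s (q + i)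
    have hlen : (((List.range p).map fun i => s (q + i)) ++
        ((List.range p).map fun i => s (q + i)) ++ [s q]).length = p + p + 1 := by
      simp
      omega
    rw [hlen, List.range_succ, List.range_add, List.map_append, List.map_append,
      List.map_map]
    congr 1
    · congr 1
      apply List.map_congr_left
      intro i hi
      rw [List.mem_range] at hi
      have hh := h i hi.le
      simp only [Function.comp_apply]
      rw [show q + (p + i) = q + p + i by omega, hh]
    · have h1 := h p le_rfl
      have h2 := h 0 (Nat.zero_le p)
      simp only [List.map_cons, List.map_nil]
      have : s (q + (p + p)) = s q := by
        rw [show q + (p + p) = q + p + p by omega, h1]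
        simpa using h2
      rw [this]

/-- Values inside the blocks of a prefixal factorization. -/
lemma block_vals {s : ℕ → A} {U : ℕ → List A}
    (hfac : ∀ n, FactorAt (U n) s (facPos U n)) (hpre : ∀ n, IsPrefixOf (U n) s) :
    ∀ n i, i < (U n).length → s (facPos U n + i) = s i := by
  intro n i hi
  have h1 := factorAt_get (hfac n) i hi
  have h2 := factorAt_get (hpre n) i hi
  rw [← h1, h2, Nat.zero_add]

lemma first_block {s : ℕ → A} {U : ℕ → List A} (hne : ∀ n, U n ≠ [])
    (hv : ∀ n i, i < (U n).length → s (facPos U n + i) = s i) :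
    s ((U 0).length) = s 0 := by
  have h := hv 1 0 (List.length_pos_iff.mpr (hne 1))
  have h1 : facPos U 1 = (U 0).length := by simp [facPos]
  rw [h1] at h
  simpa using h

/-- If block `k` has globally minimal length `p`, then `s p ≠ s 0`. -/
lemma min_block_ne {s : ℕ → A} (hof : OverlapFree s) {U : ℕ → List A}
    (hne : ∀ n, U n ≠ [])
    (hv : ∀ n i, i < (U n).length → s (facPos U n + i) = s i)
    (k : ℕ) (hmin : ∀ n, (U k).length ≤ (U n).length) :
    s ((U k).length) ≠ s 0 := by
  intro h0
  have hppos : 0 < (U k).length := List.length_pos_iff.mpr (hne k)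
  apply overlap_aux s hof (facPos U k) ((U k).length) hppos
  intro i hi
  have hfp1 : facPos U (k + 1) = facPos U k + (U k).length := rfl
  rcases Nat.lt_or_ge i ((U k).length) with h | h
  · have e1 := hv (k + 1) i (lt_of_lt_of_le h (hmin (k + 1)))
    have e2 := hv k i h
    rw [hfp1] at e1
    rw [e1, e2]
  · have hip : i = (U k).length := le_antisymm hi h
    subst hip
    have e2 : s (facPos U k + (U k).length) = s 0 := by
      have h3 := hv (k + 1) 0 (List.length_pos_iff.mpr (hne (k + 1)))
      rw [hfp1] at h3
      simpa using h3
    rcases Nat.lt_or_ge ((U k).length) ((U (k + 1)).length) with hlt | hle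
    · have e1 := hv (k + 1) ((U k).length) hlt
      rw [hfp1] at e1
      rw [e1, e2]
      exact h0
    · have hpe : (U (k + 1)).length = (U k).length := le_antisymm hle (hmin (k + 1))
      have e1 : s (facPos U (k + 2)) = s 0 := by
        have h3 := hv (k + 2) 0 (List.length_pos_iff.mpr (hne (k + 2)))
        simpa using h3
      have hfp2 : facPos U (k + 2) = facPos U k + (U k).length + (U k).length := by
        rw [facPos_succ, hfp1, hpe]
      rw [hfp2] at e1
      rw [e1, e2]

/-- Part 1: in a prefixal factorization of an overlap-free word, two blocks end
with different letters. -/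
lemma part1 {s : ℕ → A} (hof : OverlapFree s) (U : ℕ → List A)
    (hU : IsPrefixalFactorizationOf U s) :
    ∃ i j, (U i).getLast? ≠ (U j).getLast? := by
  classical
  obtain ⟨⟨hne, hfac⟩, hpre⟩ := hU
  have hv := block_vals hfac hpre
  by_contra hcon
  push_neg at hcon
  have hlast : ∀ n, (U n).getLast? = some (s ((U n).length - 1)) := by
    intro n
    have hpos : 0 < (U n).length := List.length_pos_iff.mpr (hne n)
    have hg := factorAt_get (hpre n) ((U n).length - 1) (by omega)
    rw [List.getLast?_eq_getElem?,
      List.getElem?_eq_getElem (by omega : (U n).length - 1 < (U n).length), hg,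
      Nat.zero_add]
  have hl : ∀ n m, s ((U n).length - 1) = s ((U m).length - 1) := by
    intro n m
    have h := hcon n m
    rw [hlast n, hlast m] at h
    exact Option.some.inj h
  have hex : ∃ m, ∃ k, (U k).length = m := ⟨(U 0).length, 0, rfl⟩
  obtain ⟨k, hk⟩ := Nat.find_spec hex
  have hmin : ∀ n, (U k).length ≤ (U n).length := by
    intro n
    rw [hk]
    exact Nat.find_min' hex ⟨n, rfl⟩
  have hsp := min_block_ne hof hne hv k hmin
  rcases k with _ | k'
  · exact hsp (first_block hne hv)
  · have hLpos : 0 < (U k').length := List.length_pos_iff.mpr (hne k')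
    have hppos : 0 < (U (k' + 1)).length := List.length_pos_iff.mpr (hne (k' + 1))
    apply overlap_aux s hof (facPos U k' + ((U k').length - 1)) ((U (k' + 1)).length) hppos
    intro i hi
    have hfpk : facPos U (k' + 1) = facPos U k' + (U k').length := rfl
    have hfpk2 : facPos U (k' + 2) = facPos U (k' + 1) + (U (k' + 1)).length := rfl
    rcases i with _ | j
    · have e1 := hv (k' + 1) ((U (k' + 1)).length - 1) (by omega)
      have e2 := hv k' ((U k').length - 1) (by omega)
      simp only [Nat.add_zero]
      rw [show facPos U k' + ((U k').length - 1) + (U (k' + 1)).length =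
          facPos U (k' + 1) + ((U (k' + 1)).length - 1) from by rw [hfpk]; omega]
      rw [e1, e2]
      exact hl (k' + 1) k'
    · have hj : j < (U (k' + 1)).length := by omega
      have e1 := hv (k' + 2) j (lt_of_lt_of_le hj (hmin (k' + 2)))
      have e2 := hv (k' + 1) j hj
      rw [show facPos U k' + ((U k').length - 1) + (U (k' + 1)).length + (j + 1) =
          facPos U (k' + 2) + j from by rw [hfpk2, hfpk]; omega]
      rw [show facPos U k' + ((U k').length - 1) + (j + 1) =
          facPos U (k' + 1) + j from by rw [hfpk]; omega]
      rw [e1, e2]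

theorem overlapFree_prefixal_factorization_different_last_letters
    (s : ℕ → A) (hof : OverlapFree s) :
    (∀ U : ℕ → List A, IsPrefixalFactorizationOf U s →
      ∃ i j, (U i).getLast? ≠ (U j).getLast?) ∧
    ∃ (C : Type) (_ : Fintype C) (c : List A → C),
      ∀ U : ℕ → List A, IsFactorizationOf U s → ∃ i j, c (U i) ≠ c (U j) := by
  constructor
  · intro U hU
    exact part1 hof U hU
  · classical
    refine ⟨Bool × Bool, inferInstance, fun u =>
      ((if IsPrefixOf u s then true else false),
       (if s u.length = s 0 then true else false)), ?_⟩
    intro U hfz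
    by_contra hcon
    push_neg at hcon
    obtain ⟨hne, hfac⟩ := hfz
    have hpre0 : IsPrefixOf (U 0) s := hfac 0
    have hpre : ∀ n, IsPrefixOf (U n) s := by
      intro n
      have h := hcon n 0
      rw [Prod.mk.injEq] at h
      obtain ⟨h1, -⟩ := h
      rw [if_pos hpre0] at h1
      by_contra hnp
      rw [if_neg hnp] at h1
      exact Bool.false_ne_true h1
    have hv := block_vals hfac hpre
    have hex : ∃ m, ∃ k, (U k).length = m := ⟨(U 0).length, 0, rfl⟩
    obtain ⟨k, hk⟩ := Nat.find_spec hex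
    have hmin : ∀ n, (U k).length ≤ (U n).length := by
      intro n
      rw [hk]
      exact Nat.find_min' hex ⟨n, rfl⟩
    have hsp := min_block_ne hof hne hv k hmin
    have h0 := first_block hne hv
    have h := hcon k 0
    rw [Prod.mk.injEq] at h
    obtain ⟨-, h2⟩ := h
    rw [if_neg hsp, if_pos h0] at h2
    exact Bool.false_ne_true h2
end
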